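/- Let 𝒪 = {(x,v,a) ∈ ℝ³ : v ≠ 0} and define on 𝒪 the vector fields X₁(x,v,a) = (0,0,2v), X₂(x,v,a) = (0,v,2a), X₃(x,v,a) = (v,a,3a²/(2v)), and Y₁(x,v,a) = (1,0,0), Y₂(x,v,a) = (x,v,a), Y₃(x,v,a) = (x², 2vx, 2(ax+v²)). Then at every point of 𝒪: [Xα,Yβ] = 0 for all α,β ∈ {1,2,3}, and moreover [Y₁,Y₂] = Y₁, [Y₁,Y₃] = 2Y₂, [Y₂,Y₃] = Y₃; hence Y₁,Y₂,Y₃ span a Lie algebra of Lie symmetries of the Schwarz system isomorphic to 𝔰𝔩₂, and ⟨X₁,X₂,X₃,Y₁,Y₂,Y₃⟩ is a Lie algebra isomorphic to 𝔰𝔩₂ ⊕ 𝔰𝔩₂. -/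

import Mathlib

/-- The pointwise Lie bracket of two vector fields on (an open subset of) ℝⁿ,
    `[V,W](p) = (DW)(p)(V(p)) − (DV)(p)(W(p))`. -/
noncomputable def vbracket {n : ℕ} (V W : (Fin n → ℝ) → (Fin n → ℝ)) :
    (Fin n → ℝ) → (Fin n → ℝ) :=
  fun p => fderiv ℝ W p (V p) - fderiv ℝ V p (W p)

/-- Coordinates on 𝒪 ⊂ ℝ³ are (x,v,a) = (p 0, p 1, p 2). The Vessiot–Guldberg
vector fields X₁, X₂, X₃ of the Schwarz system, indexed by `Fin 3`. -/
noncomputable def schX : Fin 3 → (Fin 3 → ℝ) → (Fin 3 → ℝ) :=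
  ![fun p => ![0, 0, 2 * p 1],
    fun p => ![0, p 1, 2 * p 2],
    fun p => ![p 1, p 2, 3 * (p 2) ^ 2 / (2 * p 1)]]

/-- The Lie symmetries Y₁, Y₂, Y₃ of the Schwarz system, indexed by `Fin 3`. -/
def schY : Fin 3 → (Fin 3 → ℝ) → (Fin 3 → ℝ) :=
  ![fun _ => ![1, 0, 0],
    fun p => ![p 0, p 1, p 2],
    fun p => ![(p 0) ^ 2, 2 * p 1 * p 0, 2 * (p 2 * p 0 + (p 1) ^ 2)]]

/-! Y₁, Y₂, Y₃ are the second prolongations of ∂ₓ, x∂ₓ, x²∂ₓ, the generators of the Möbius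
action of SL₂ on the dependent variable x, which leaves the Schwarzian derivative invariant;
this is why they commute with the Vessiot–Guldberg fields X₁, X₂, X₃.
The proof itself is a computation: all six fields are rational, so their derivatives are explicit
Jacobian matrices J, and [V,W](p) = J_W(p) V(p) − J_V(p) W(p). -/

open Matrix ContinuousLinearMap

noncomputable def mulVecCLM {m n : Type*} [Fintype n] (J : Matrix m n ℝ) : (n → ℝ) →L[ℝ] m → ℝ :=
  LinearMap.toContinuousLinearMap J.mulVecLin

@[simp]
theorem mulVecCLM_apply {m n : Type*} [Fintype n] (J : Matrix m n ℝ) (v : n → ℝ) :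
    mulVecCLM J v = J *ᵥ v :=
  rfl

theorem hasFDerivAt_of_eq_mulVec {m n : Type*} [Fintype n] {F : (n → ℝ) → m → ℝ}
    {J : Matrix m n ℝ} (hF : ∀ q, F q = J *ᵥ q) (p : n → ℝ) :
    HasFDerivAt F (mulVecCLM J) p := by
  rw [show F = mulVecCLM J from funext hF]
  exact (mulVecCLM J).hasFDerivAt

theorem vbracket_eq_mulVec_sub_mulVec {n : ℕ} {V W : (Fin n → ℝ) → Fin n → ℝ}
    {JV JW : Matrix (Fin n) (Fin n) ℝ} {p : Fin n → ℝ}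
    (hV : HasFDerivAt V (mulVecCLM JV) p) (hW : HasFDerivAt W (mulVecCLM JW) p) :
    vbracket V W p = JW *ᵥ V p - JV *ᵥ W p := by
  simp [vbracket, hV.fderiv, hW.fderiv]

noncomputable def schXJac : Fin 3 → (Fin 3 → ℝ) → Matrix (Fin 3) (Fin 3) ℝ :=
  ![fun _ => !![0, 0, 0; 0, 0, 0; 0, 2, 0],
    fun _ => !![0, 0, 0; 0, 1, 0; 0, 0, 2],
    fun p => !![0, 1, 0; 0, 0, 1; 0, -3 * p 2 ^ 2 / (2 * p 1 ^ 2), 3 * p 2 / p 1]]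

def schYJac : Fin 3 → (Fin 3 → ℝ) → Matrix (Fin 3) (Fin 3) ℝ :=
  ![fun _ => 0,
    fun _ => 1,
    fun p => !![2 * p 0, 0, 0; 2 * p 1, 2 * p 0, 0; 2 * p 2, 4 * p 1, 2 * p 0]]

theorem hasFDerivAt_schX (α : Fin 3) {p : Fin 3 → ℝ} (hp : p 1 ≠ 0) :
    HasFDerivAt (schX α) (mulVecCLM (schXJac α p)) p := by
  fin_cases α
  · refine hasFDerivAt_of_eq_mulVec (fun q => ?_) p
    ext i; fin_cases i <;> simp [schX, schXJac, mulVec, dotProduct, Fin.sum_univ_three]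
  · refine hasFDerivAt_of_eq_mulVec (fun q => ?_) p
    ext i; fin_cases i <;> simp [schX, schXJac, mulVec, dotProduct, Fin.sum_univ_three]
  · have hcoord (i : Fin 3) := hasFDerivAt_apply (𝕜 := ℝ) i p
    rw [hasFDerivAt_pi']
    intro i
    fin_cases i
    · exact (hcoord 1).congr_fderiv
        (by ext v; simp [schXJac, dotProduct, Fin.sum_univ_three])
    · exact (hcoord 2).congr_fderiv
        (by ext v; simp [schXJac, dotProduct, Fin.sum_univ_three])
    · show HasFDerivAt (fun q => 3 * q 2 ^ 2 / (2 * q 1)) _ p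
      rw [show (fun q : Fin 3 → ℝ => 3 * q 2 ^ 2 / (2 * q 1)) =
          fun q => 3 / 2 * q 2 ^ 2 * (q 1)⁻¹ from funext fun q => by ring]
      exact ((((hcoord 2).pow 2).const_mul (3 / 2)).mul
        ((hasDerivAt_inv hp).comp_hasFDerivAt p (hcoord 1))).congr_fderiv
          (by ext v; simp [schXJac, dotProduct, Fin.sum_univ_three]; field_simp)

theorem hasFDerivAt_schY (β : Fin 3) (p : Fin 3 → ℝ) :
    HasFDerivAt (schY β) (mulVecCLM (schYJac β p)) p := by
  fin_cases β
  · exact (hasFDerivAt_const _ p).congr_fderiv (by ext v; simp [schYJac])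
  · refine hasFDerivAt_of_eq_mulVec (fun q => ?_) p
    ext i; fin_cases i <;> simp [schY, schYJac]
  · have hcoord (i : Fin 3) := hasFDerivAt_apply (𝕜 := ℝ) i p
    rw [hasFDerivAt_pi']
    intro i
    fin_cases i
    · exact ((hcoord 0).pow 2).congr_fderiv
        (by ext v; simp [schYJac, dotProduct, Fin.sum_univ_three])
    · exact (((hcoord 1).const_mul 2).mul (hcoord 0)).congr_fderiv
        (by ext v; simp [schYJac, dotProduct, Fin.sum_univ_three]; ring)
    · exact ((((hcoord 2).mul (hcoord 0)).add ((hcoord 1).pow 2)).const_mul 2).congr_fderiv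
        (by ext v; simp [schYJac, dotProduct, Fin.sum_univ_three]; ring)

theorem vbracket_schX_schY {p : Fin 3 → ℝ} (hp : p 1 ≠ 0) (α β : Fin 3) :
    vbracket (schX α) (schY β) p = 0 := by
  rw [vbracket_eq_mulVec_sub_mulVec (hasFDerivAt_schX α hp) (hasFDerivAt_schY β p)]
  fin_cases α <;> fin_cases β <;> ext i <;> fin_cases i <;>
    simp [schX, schY, schXJac, schYJac] <;> field_simp <;> ring

theorem vbracket_schY_zero_one (p : Fin 3 → ℝ) : vbracket (schY 0) (schY 1) p = schY 0 p := by
  rw [vbracket_eq_mulVec_sub_mulVec (hasFDerivAt_schY 0 p) (hasFDerivAt_schY 1 p)]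
  simp [schYJac]

theorem vbracket_schY_zero_two (p : Fin 3 → ℝ) :
    vbracket (schY 0) (schY 2) p = (2 : ℝ) • schY 1 p := by
  rw [vbracket_eq_mulVec_sub_mulVec (hasFDerivAt_schY 0 p) (hasFDerivAt_schY 2 p)]
  ext i; fin_cases i <;> simp [schY, schYJac]

theorem vbracket_schY_one_two (p : Fin 3 → ℝ) : vbracket (schY 1) (schY 2) p = schY 2 p := by
  rw [vbracket_eq_mulVec_sub_mulVec (hasFDerivAt_schY 1 p) (hasFDerivAt_schY 2 p)]
  ext i; fin_cases i <;> simp [schY, schYJac] <;> ring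

/-- At every point of 𝒪 = {v ≠ 0}: [Xα,Yβ] = 0 for all α,β, and
[Y₁,Y₂] = Y₁, [Y₁,Y₃] = 2Y₂, [Y₂,Y₃] = Y₃; hence Y₁,Y₂,Y₃ span a Lie algebra
of Lie symmetries isomorphic to 𝔰𝔩₂ and ⟨X₁,X₂,X₃,Y₁,Y₂,Y₃⟩ ≅ 𝔰𝔩₂ ⊕ 𝔰𝔩₂. -/
theorem schwarz_symmetries_sl2_sl2 :
    ∀ p : Fin 3 → ℝ, p 1 ≠ 0 →
      (∀ α β : Fin 3, vbracket (schX α) (schY β) p = 0) ∧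
      vbracket (schY 0) (schY 1) p = schY 0 p ∧
      vbracket (schY 0) (schY 2) p = (2 : ℝ) • schY 1 p ∧
      vbracket (schY 1) (schY 2) p = schY 2 p :=
  fun p hp => ⟨vbracket_schX_schY hp, vbracket_schY_zero_one p, vbracket_schY_zero_two p,
    vbracket_schY_one_two p⟩
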